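/- Let X ⊆ [0,1] be a bounded set, let δ > 0, and let f, g ∈ C_u(X) with g(x) > 0 for all x ∈ X and sup_{x∈X} |g(x)| ≤ δ. Then N_δ(f+g) ≥ (1/2) · N_δ(f). -/

import Mathlib

open Set Filter

noncomputable section

/-- Number of cubes `[nδ,(n+1)δ]` of the standard `δ`-grid in `ℝ` meeting `E`. -/
def boxCount (δ : ℝ) (E : Set ℝ) : ℕ :=
  Set.ncard {n : ℤ | (Set.Icc ((n : ℝ) * δ) ((n + 1) * δ) ∩ E).Nonempty}

/-- Number of cubes of the standard `δ`-grid in `ℝ²` meeting `E`. -/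
def boxCount2 (δ : ℝ) (E : Set (ℝ × ℝ)) : ℕ :=
  Set.ncard {p : ℤ × ℤ |
    ((Set.Icc ((p.1 : ℝ) * δ) ((p.1 + 1) * δ) ×ˢ
      Set.Icc ((p.2 : ℝ) * δ) ((p.2 + 1) * δ)) ∩ E).Nonempty}

/-- Upper box dimension of a set `E ⊆ ℝ`. -/
def upperBoxDim (E : Set ℝ) : ℝ :=
  Filter.limsup (fun δ : ℝ => Real.log (boxCount δ E) / (-Real.log δ))
    (nhdsWithin 0 (Set.Ioi 0))

/-- Upper box dimension of a set `E ⊆ ℝ²`. -/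
def upperBoxDim2 (E : Set (ℝ × ℝ)) : ℝ :=
  Filter.limsup (fun δ : ℝ => Real.log (boxCount2 δ E) / (-Real.log δ))
    (nhdsWithin 0 (Set.Ioi 0))

/-- The graph of `f` over `X`, as a subset of `ℝ²`. -/
def graphOver (f : ℝ → ℝ) (X : Set ℝ) : Set (ℝ × ℝ) :=
  {p : ℝ × ℝ | p.1 ∈ X ∧ p.2 = f p.1}

/-- `f` is (the restriction to `X` of) a bounded uniformly continuous function on `X`,
i.e. `f ∈ C_u(X)`. -/
def MemCu (f : ℝ → ℝ) (X : Set ℝ) : Prop :=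
  UniformContinuousOn f X ∧ ∃ M : ℝ, ∀ x ∈ X, |f x| ≤ M

/-- The upper graph box dimension of `X`:
the supremum of the upper box dimensions of graphs of functions in `C_u(X)`. -/
def upperGraphBoxDim (X : Set ℝ) : ℝ :=
  sSup {d : ℝ | ∃ f : ℝ → ℝ, MemCu f X ∧ d = upperBoxDim2 (graphOver f X)}

/-- `g_m(X) = Σ_{k=1}^m min{m, #(X ∩ [(k-1)/m, k/m])}`. -/
def gseq (X : Set ℝ) (m : ℕ) : ℕ :=
  ∑ k ∈ Finset.Icc 1 m,
    (min (m : ℕ∞) ((X ∩ Set.Icc (((k : ℝ) - 1) / m) ((k : ℝ) / m)).encard)).toNat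

/-- `N_δ(f)` for a function `f` defined on `X`: the number of half-open grid squares
`[iδ,(i+1)δ) × [jδ,(j+1)δ)`, `i,j ∈ ℤ`, meeting the graph of `f` over `X`. -/
def gridCountGraph (δ : ℝ) (f : ℝ → ℝ) (X : Set ℝ) : ℕ :=
  Set.ncard {p : ℤ × ℤ | ∃ x ∈ X,
    x ∈ Set.Ico ((p.1 : ℝ) * δ) ((p.1 + 1) * δ) ∧
    f x ∈ Set.Ico ((p.2 : ℝ) * δ) ((p.2 + 1) * δ)}

/-- A continuous piecewise-linear (polygonal) function on `[0,1]`. -/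
def IsPolygonal (F : ℝ → ℝ) : Prop :=
  ContinuousOn F (Set.Icc 0 1) ∧
  ∃ (n : ℕ) (t : ℕ → ℝ), 0 < n ∧ t 0 = 0 ∧ t n = 1 ∧
    (∀ i < n, t i < t (i + 1)) ∧
    ∀ i < n, ∃ a b : ℝ, ∀ x ∈ Set.Icc (t i) (t (i + 1)), F x = a * x + b

/-- `g ∈ P(X)`: `g` agrees on `X` with a polygonal function on `[0,1]`. -/
def MemPX (g : ℝ → ℝ) (X : Set ℝ) : Prop :=
  ∃ F : ℝ → ℝ, IsPolygonal F ∧ Set.EqOn g F X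

/-
The half-open square of the `δ`-grid containing `(x, f x)` has index `(⌊x/δ⌋, ⌊f x/δ⌋)`.
Adding `g x ∈ (0, δ]` raises the row index by `0` or `1`, so every square met by the graph of `f`
is met by the graph of `f + g` or lies just below one that is; hence `N_δ(f) ≤ 2 N_δ(f + g)`.
As `ncard` vanishes on infinite sets, the converse comparison is needed as well: the two counts
are finite or infinite together.
-/

theorem Set.ncard_image_le_two_mul_ncard_image {α β : Type*} {s : Set α} {φ ψ : α → β}
    {u : β → β} (hu : Function.Injective u) (h : ∀ x ∈ s, φ x = ψ x ∨ φ x = u (ψ x)) :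
    (φ '' s).ncard ≤ 2 * (ψ '' s).ncard := by
  have hφψ : φ '' s ⊆ ψ '' s ∪ u '' (ψ '' s) := by
    rintro _ ⟨x, hx, rfl⟩
    rcases h x hx with hx' | hx'
    · exact Or.inl ⟨x, hx, hx'.symm⟩
    · exact Or.inr ⟨ψ x, ⟨x, hx, rfl⟩, hx'.symm⟩
  by_cases hψ : (ψ '' s).Finite
  · calc (φ '' s).ncard ≤ (ψ '' s ∪ u '' (ψ '' s)).ncard :=
          ncard_le_ncard hφψ (hψ.union (hψ.image u))
      _ ≤ (ψ '' s).ncard + (u '' (ψ '' s)).ncard := ncard_union_le _ _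
      _ = 2 * (ψ '' s).ncard := by rw [ncard_image_of_injective _ hu, two_mul]
  · have hψφ : ψ '' s ⊆ φ '' s ∪ u ⁻¹' (φ '' s) := by
      rintro _ ⟨x, hx, rfl⟩
      rcases h x hx with hx' | hx'
      · exact Or.inl ⟨x, hx, hx'⟩
      · exact Or.inr ⟨x, hx, hx'⟩
    have hφ : (φ '' s).Infinite := fun hφ =>
      hψ ((hφ.union (hφ.preimage hu.injOn)).subset hψφ)
    rw [hφ.ncard]
    exact Nat.zero_le _

theorem Int.floor_add_eq_or_eq_add_one {R : Type*} [Ring R] [LinearOrder R]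
    [IsStrictOrderedRing R] [FloorRing R] {a t : R} (ht₀ : 0 ≤ t) (ht₁ : t ≤ 1) :
    ⌊a + t⌋ = ⌊a⌋ ∨ ⌊a + t⌋ = ⌊a⌋ + 1 := by
  have hlo : ⌊a⌋ ≤ ⌊a + t⌋ := Int.floor_mono (le_add_of_nonneg_right ht₀)
  have hhi : ⌊a + t⌋ ≤ ⌊a⌋ + 1 := by
    rw [← Int.floor_add_one]
    exact Int.floor_mono (add_le_add_right ht₁ a)
  omega

theorem mem_Ico_mul_iff_floor_div_eq {K : Type*} [Field K] [LinearOrder K]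
    [IsStrictOrderedRing K] [FloorRing K] {δ x : K} (hδ : 0 < δ) (i : ℤ) :
    x ∈ Ico ((i : K) * δ) ((i + 1) * δ) ↔ ⌊x / δ⌋ = i := by
  rw [Int.floor_eq_iff, le_div_iff₀ hδ, div_lt_iff₀ hδ, mem_Ico]

def gridCell (δ : ℝ) (f : ℝ → ℝ) (x : ℝ) : ℤ × ℤ :=
  (⌊x / δ⌋, ⌊f x / δ⌋)

theorem gridCountGraph_eq_ncard_image {δ : ℝ} (hδ : 0 < δ) (f : ℝ → ℝ) (X : Set ℝ) :
    gridCountGraph δ f X = (gridCell δ f '' X).ncard := by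
  unfold gridCountGraph
  congr 1
  ext ⟨i, j⟩
  simp only [mem_Ico_mul_iff_floor_div_eq hδ, gridCell, mem_ofPred_eq, mem_image, Prod.mk.injEq]

theorem gridCell_eq_or_eq_sub {δ : ℝ} (hδ : 0 < δ) (f : ℝ → ℝ) {g : ℝ → ℝ} {x : ℝ}
    (hg₀ : 0 ≤ g x) (hgδ : g x ≤ δ) :
    gridCell δ f x = gridCell δ (f + g) x ∨ gridCell δ f x = gridCell δ (f + g) x - (0, 1) := by
  have hrow : ⌊(f x + g x) / δ⌋ = ⌊f x / δ⌋ ∨ ⌊(f x + g x) / δ⌋ = ⌊f x / δ⌋ + 1 := by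
    rw [add_div]
    exact Int.floor_add_eq_or_eq_add_one (div_nonneg hg₀ hδ.le) ((div_le_one hδ).mpr hgδ)
  rcases hrow with hrow | hrow
  · left
    simp only [gridCell, Pi.add_apply, hrow]
  · right
    ext <;> simp only [gridCell, Pi.add_apply, hrow, Prod.fst_sub, Prod.snd_sub, sub_zero,
      add_sub_cancel_right]

theorem gridCount_add_ge_half_general (X : Set ℝ) (δ : ℝ) (hδ : 0 < δ)
    (f g : ℝ → ℝ) (hgpos : ∀ x ∈ X, 0 < g x) (hgle : ∀ x ∈ X, |g x| ≤ δ) :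
    (gridCountGraph δ (f + g) X : ℝ) ≥ (1 / 2) * gridCountGraph δ f X := by
  have hcount : gridCountGraph δ f X ≤ 2 * gridCountGraph δ (f + g) X := by
    rw [gridCountGraph_eq_ncard_image hδ, gridCountGraph_eq_ncard_image hδ]
    exact Set.ncard_image_le_two_mul_ncard_image (sub_left_injective (b := ((0 : ℤ), (1 : ℤ))))
      fun x hx => gridCell_eq_or_eq_sub hδ f (hgpos x hx).le ((le_abs_self _).trans (hgle x hx))
  have : (gridCountGraph δ f X : ℝ) ≤ 2 * gridCountGraph δ (f + g) X := by exact_mod_cast hcount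
  linarith

/-- if `g > 0` on `X` and `sup_{x ∈ X} |g x| ≤ δ`, then
`N_δ(f+g) ≥ (1/2) N_δ(f)`. -/
theorem gridCount_add_ge_half (X : Set ℝ) (hX : X ⊆ Set.Icc 0 1) (δ : ℝ) (hδ : 0 < δ)
    (f g : ℝ → ℝ) (hf : MemCu f X) (hg : MemCu g X)
    (hgpos : ∀ x ∈ X, 0 < g x) (hgle : ∀ x ∈ X, |g x| ≤ δ) :
    (gridCountGraph δ (f + g) X : ℝ) ≥ (1 / 2) * gridCountGraph δ f X :=
  gridCount_add_ge_half_general X δ hδ f g hgpos hgle
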